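/- Let λ, c > 0. Define p : ℝ × (0,∞) → ℝ on the open cone {(x,t) : |x| < ct, t > 0} by p(x,t) = λ I₀((λ/c)√(c²t² − x²)) / (2c sinh(λt)). Then p satisfies the one-dimensional telegraph-type equation with time-varying coefficient ∂²p/∂t² + 2λ coth(λt) ∂p/∂t = c² ∂²p/∂x² on the open cone. -/

import Mathlib

/-!
Writing `I₀(z) = F(z²/4)` with `F(w) = Σ wᵏ/(k!)²`, the series `F` solves `w F'' + F' = F`.
Consequently `v(x,t) = I₀((λ/c)√(c²t² - x²)) = F((λ/c)²(c²t² - x²)/4)` solves the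
Klein–Gordon equation `v_tt - c² v_xx = λ² v`. For any `g`, the function `v/g` satisfies
`(v/g)'' + 2 (g'/g) (v/g)' = (v'' - (g''/g) v)/g`; with `g = sinh(λt)` we have `g'' = λ² g`,
so the `λ² v` terms cancel and the telegraph-type equation for `p = λ v / (2c g)` follows.
-/

open Real

/-- The modified Bessel function of order zero,
`I₀(x) = Σ_{k=0}^∞ (x/2)^{2k} / (k!)²`. -/
noncomputable def besselI0 (x : ℝ) : ℝ :=
  ∑' k : ℕ, (x / 2) ^ (2 * k) / ((k.factorial : ℝ)) ^ 2

open Topology Nat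

noncomputable def powerSum (a : ℕ → ℝ) (w : ℝ) : ℝ := ∑' k, a k * w ^ k

noncomputable def derivCoeff (a : ℕ → ℝ) (k : ℕ) : ℝ := (k + 1) * a (k + 1)

section PowerSum

variable {a : ℕ → ℝ}

theorem summable_mul_pow_of_abs_le (ha : ∀ k, |a k| ≤ (k ! : ℝ)⁻¹) (w : ℝ) :
    Summable fun k => a k * w ^ k := by
  refine .of_norm_bounded (Real.summable_pow_div_factorial |w|) fun k => ?_
  rw [Real.norm_eq_abs, abs_mul, abs_pow, div_eq_inv_mul]
  exact mul_le_mul_of_nonneg_right (ha k) (by positivity)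

theorem abs_derivCoeff_le (ha : ∀ k, |a k| ≤ (k ! : ℝ)⁻¹) (k : ℕ) :
    |derivCoeff a k| ≤ (k ! : ℝ)⁻¹ := by
  have hk := ha (k + 1)
  rw [factorial_succ, cast_mul, mul_inv, ← div_eq_inv_mul, le_div_iff₀' (by positivity)] at hk
  rwa [derivCoeff, abs_mul, abs_of_pos (by positivity), ← cast_add_one]

theorem hasDerivAt_powerSum (ha : ∀ k, |a k| ≤ (k ! : ℝ)⁻¹) (w : ℝ) :
    HasDerivAt (powerSum a) (powerSum (derivCoeff a) w) w := by
  set R := |w| + 1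
  have hR : 1 ≤ R := le_add_of_nonneg_left (abs_nonneg w)
  have hbound : ∀ (k : ℕ), ∀ y ∈ Metric.ball (0 : ℝ) R,
      ‖a k * (k * y ^ (k - 1))‖ ≤ (2 * R) ^ k / k ! := by
    intro k y hy
    rw [mem_ball_zero_iff, Real.norm_eq_abs] at hy
    have hk : (k : ℝ) ≤ 2 ^ k := by exact_mod_cast (Nat.lt_two_pow_self (n := k)).le
    have hy' : |y| ^ (k - 1) ≤ R ^ k := calc
      |y| ^ (k - 1) ≤ R ^ (k - 1) := by gcongr
      _ ≤ R ^ k := pow_le_pow_right₀ hR (Nat.sub_le k 1)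
    rw [Real.norm_eq_abs, abs_mul, abs_mul, abs_pow, Nat.abs_cast, mul_pow, div_eq_inv_mul]
    gcongr
    exact ha k
  have hderiv : HasDerivAt (powerSum a) (∑' k, a k * (k * w ^ (k - 1))) w :=
    hasDerivAt_tsum_of_isPreconnected (Real.summable_pow_div_factorial (2 * R))
      Metric.isOpen_ball (convex_ball 0 R).isPreconnected
      (fun k y _ => (hasDerivAt_pow k y).const_mul (a k)) hbound
      (Metric.mem_ball_self (by linarith)) (summable_mul_pow_of_abs_le ha 0)
      (by simp [R])
  convert hderiv using 1
  have hterm (k : ℕ) :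
      a (k + 1) * ((k + 1 : ℕ) * w ^ (k + 1 - 1)) = derivCoeff a k * w ^ k := by
    rw [derivCoeff, Nat.add_sub_cancel]
    push_cast
    ring
  refine ((hasSum_nat_add_iff' 1).mp ?_).tsum_eq.symm
  simp only [Finset.range_one, Finset.sum_singleton, cast_zero, zero_mul, mul_zero, sub_zero,
    hterm]
  exact (summable_mul_pow_of_abs_le (abs_derivCoeff_le ha) w).hasSum

theorem hasSum_mul_powerSum_derivCoeff {w : ℝ} (h : Summable fun k => derivCoeff a k * w ^ k) :
    HasSum (fun k => k * a k * w ^ k) (w * powerSum (derivCoeff a) w) := by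
  have hterm (k : ℕ) :
      ((k + 1 : ℕ) : ℝ) * a (k + 1) * w ^ (k + 1) = w * (derivCoeff a k * w ^ k) := by
    rw [derivCoeff]
    push_cast
    ring
  rw [← hasSum_nat_add_iff' 1]
  simp only [Finset.range_one, Finset.sum_singleton, cast_zero, zero_mul, sub_zero, hterm]
  exact h.hasSum.mul_left w

end PowerSum

section SecondDerivatives

variable {u u' g g' : ℝ → ℝ} {u'' g'' t : ℝ}

theorem iteratedDeriv_two_eq_of_hasDerivAt (hu : ∀ s, HasDerivAt u (u' s) s)
    (hu' : HasDerivAt u' u'' t) : iteratedDeriv 2 u t = u'' := by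
  rw [iteratedDeriv_succ', iteratedDeriv_one, funext fun s => (hu s).deriv, hu'.deriv]

theorem iteratedDeriv_two_div_add_deriv_div (hu : ∀ s, HasDerivAt u (u' s) s)
    (hu' : HasDerivAt u' u'' t) (hg : ∀ s, HasDerivAt g (g' s) s) (hg' : HasDerivAt g' g'' t)
    (hgt : g t ≠ 0) :
    iteratedDeriv 2 (fun s => u s / g s) t + 2 * (g' t / g t) * deriv (fun s => u s / g s) t
      = (iteratedDeriv 2 u t - g'' / g t * u t) / g t := by
  have hquot (s : ℝ) (hs : g s ≠ 0) :
      HasDerivAt (fun s => u s / g s) ((u' s * g s - u s * g' s) / g s ^ 2) s :=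
    (hu s).div (hg s) hs
  have hderiv :
      deriv (fun s => u s / g s) =ᶠ[𝓝 t] fun s => (u' s * g s - u s * g' s) / g s ^ 2 :=
    ((hg t).continuousAt.eventually_ne hgt).mono fun s hs => (hquot s hs).deriv
  have hderiv2 := ((hu'.fun_mul (hg t)).fun_sub ((hu t).fun_mul hg')).fun_div
    ((hg t).fun_pow 2) (pow_ne_zero 2 hgt)
  rw [iteratedDeriv_succ', iteratedDeriv_one, hderiv.deriv_eq, hderiv2.deriv, (hquot t hgt).deriv,
    iteratedDeriv_two_eq_of_hasDerivAt hu hu']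
  field_simp
  ring

theorem iteratedDeriv_two_div_sinh_add_deriv (lam : ℝ) (hu : ∀ s, HasDerivAt u (u' s) s)
    (hu' : HasDerivAt u' u'' t) (ht : sinh (lam * t) ≠ 0) :
    iteratedDeriv 2 (fun s => u s / sinh (lam * s)) t
        + 2 * lam * (cosh (lam * t) / sinh (lam * t)) * deriv (fun s => u s / sinh (lam * s)) t
      = (iteratedDeriv 2 u t - lam ^ 2 * u t) / sinh (lam * t) := by
  have hg (s : ℝ) : HasDerivAt (fun s => sinh (lam * s)) (lam * cosh (lam * s)) s :=
    ((hasDerivAt_id s).const_mul lam).sinh.congr_deriv (by simp only [id]; ring)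
  have hg' : HasDerivAt (fun s => lam * cosh (lam * s)) (lam ^ 2 * sinh (lam * t)) t :=
    (((hasDerivAt_id t).const_mul lam).cosh.const_mul lam).congr_deriv (by simp only [id]; ring)
  have h := iteratedDeriv_two_div_add_deriv_div hu hu' hg hg' ht
  rw [mul_div_cancel_right₀ _ ht] at h
  linear_combination h

end SecondDerivatives

section ChainRule

variable {F F' F'' q : ℝ → ℝ} {a : ℝ}

theorem hasDerivAt_comp_of_hasDerivAt_linear (hF : ∀ w, HasDerivAt F (F' w) w)
    (hq : ∀ s, HasDerivAt q (a * s) s) (s : ℝ) :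
    HasDerivAt (fun s => F (q s)) (F' (q s) * (a * s)) s :=
  (hF (q s)).comp s (hq s)

theorem hasDerivAt_deriv_comp_of_hasDerivAt_linear (hF' : ∀ w, HasDerivAt F' (F'' w) w)
    (hq : ∀ s, HasDerivAt q (a * s) s) (s : ℝ) :
    HasDerivAt (fun s => F' (q s) * (a * s)) (F'' (q s) * (a * s) ^ 2 + F' (q s) * a) s :=
  (((hF' (q s)).comp s (hq s)).mul ((hasDerivAt_id s).const_mul a)).congr_deriv
    (by simp only [Function.comp, id]; ring)

theorem iteratedDeriv_two_comp_of_hasDerivAt_linear (hF : ∀ w, HasDerivAt F (F' w) w)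
    (hF' : ∀ w, HasDerivAt F' (F'' w) w) (hq : ∀ s, HasDerivAt q (a * s) s) (s : ℝ) :
    iteratedDeriv 2 (fun s => F (q s)) s = F'' (q s) * (a * s) ^ 2 + F' (q s) * a :=
  iteratedDeriv_two_eq_of_hasDerivAt (hasDerivAt_comp_of_hasDerivAt_linear hF hq)
    (hasDerivAt_deriv_comp_of_hasDerivAt_linear hF' hq s)

end ChainRule

theorem hasDerivAt_quadratic (κ c x s : ℝ) :
    HasDerivAt (fun s => κ ^ 2 / 4 * (c ^ 2 * s ^ 2 - x ^ 2)) (κ ^ 2 * c ^ 2 / 2 * s) s :=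
  ((((hasDerivAt_pow 2 s).const_mul (c ^ 2)).sub_const (x ^ 2)).const_mul (κ ^ 2 / 4)).congr_deriv
    (by push_cast; ring)

noncomputable def besselCoeff (k : ℕ) : ℝ := ((k ! : ℝ) ^ 2)⁻¹

theorem abs_besselCoeff_le (k : ℕ) : |besselCoeff k| ≤ (k ! : ℝ)⁻¹ := by
  have hk : (1 : ℝ) ≤ k ! := by exact_mod_cast k.factorial_pos
  rw [besselCoeff, abs_of_pos (by positivity)]
  exact inv_anti₀ (by positivity) (le_self_pow₀ hk two_ne_zero)

theorem besselI0_mul_sqrt (κ : ℝ) {r : ℝ} (hr : 0 ≤ r) :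
    besselI0 (κ * √r) = powerSum besselCoeff (κ ^ 2 / 4 * r) := by
  simp only [besselI0, powerSum, besselCoeff, pow_mul]
  congr 1
  funext k
  rw [div_pow, mul_pow, sq_sqrt hr]
  ring

theorem besselI0_mul_sqrt_eventuallyEq (κ : ℝ) {r : ℝ → ℝ} {t : ℝ}
    (hr : ContinuousAt r t) (ht : 0 < r t) :
    (fun s => besselI0 (κ * √(r s))) =ᶠ[𝓝 t]
      fun s => powerSum besselCoeff (κ ^ 2 / 4 * r s) :=
  (continuousAt_const.eventually_lt hr ht).mono fun _ hs => besselI0_mul_sqrt κ hs.le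

theorem powerSum_besselCoeff_ode (w : ℝ) :
    w * powerSum (derivCoeff (derivCoeff besselCoeff)) w + powerSum (derivCoeff besselCoeff) w
      = powerSum besselCoeff w := by
  have hb := abs_derivCoeff_le abs_besselCoeff_le
  have hcoeff (k : ℕ) :
      k * derivCoeff besselCoeff k * w ^ k + derivCoeff besselCoeff k * w ^ k
        = besselCoeff k * w ^ k := by
    simp only [derivCoeff, besselCoeff, factorial_succ, cast_mul]
    field_simp
    push_cast
    ring
  refine ((hasSum_mul_powerSum_derivCoeff (summable_mul_pow_of_abs_le (abs_derivCoeff_le hb) w)).add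
    (summable_mul_pow_of_abs_le hb w).hasSum).unique ?_
  simp only [hcoeff]
  exact (summable_mul_pow_of_abs_le abs_besselCoeff_le w).hasSum

theorem powerSum_besselCoeff_kleinGordon (κ c x t : ℝ) :
    iteratedDeriv 2 (fun s => powerSum besselCoeff (κ ^ 2 / 4 * (c ^ 2 * s ^ 2 - x ^ 2))) t
      - c ^ 2 * iteratedDeriv 2
          (fun y => powerSum besselCoeff (κ ^ 2 / 4 * (c ^ 2 * t ^ 2 - y ^ 2))) x
      = (κ * c) ^ 2 * powerSum besselCoeff (κ ^ 2 / 4 * (c ^ 2 * t ^ 2 - x ^ 2)) := by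
  have hF := hasDerivAt_powerSum abs_besselCoeff_le
  have hF' := hasDerivAt_powerSum (abs_derivCoeff_le abs_besselCoeff_le)
  have hspace (y : ℝ) :
      HasDerivAt (fun y => κ ^ 2 / 4 * (c ^ 2 * t ^ 2 - y ^ 2)) (-(κ ^ 2 / 2) * y) y :=
    (((hasDerivAt_pow 2 y).const_sub (c ^ 2 * t ^ 2)).const_mul (κ ^ 2 / 4)).congr_deriv
      (by push_cast; ring)
  rw [iteratedDeriv_two_comp_of_hasDerivAt_linear hF hF' (hasDerivAt_quadratic κ c x),
    iteratedDeriv_two_comp_of_hasDerivAt_linear hF hF' hspace, ← powerSum_besselCoeff_ode]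
  ring

/-- the law of the projection of `X₃(t)` onto the line,
`p(x,t) = λ I₀((λ/c)√(c²t² - x²)) / (2c sinh(λt))`, satisfies the
one-dimensional telegraph-type equation with time-varying coefficient
`∂²p/∂t² + 2λ coth(λt) ∂p/∂t = c² ∂²p/∂x²` on the open cone
`{(x,t) : |x| < ct, t > 0}`. -/
theorem statement15 (lam c : ℝ) (hlam : 0 < lam) (hc : 0 < c)
    (p : ℝ → ℝ → ℝ)
    (hp : ∀ x t : ℝ, p x t =
      lam * besselI0 (lam / c * Real.sqrt (c ^ 2 * t ^ 2 - x ^ 2)) /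
        (2 * c * Real.sinh (lam * t))) :
    ∀ x t : ℝ, 0 < t → |x| < c * t →
      iteratedDeriv 2 (fun s => p x s) t
        + 2 * lam * (Real.cosh (lam * t) / Real.sinh (lam * t)) *
            deriv (fun s => p x s) t
      = c ^ 2 * iteratedDeriv 2 (fun s => p s t) x := by
  intro x t ht hxt
  have hcone : 0 < c ^ 2 * t ^ 2 - x ^ 2 := by nlinarith [abs_nonneg x, sq_abs x]
  have hsinh : sinh (lam * t) ≠ 0 := (sinh_pos_iff.mpr (mul_pos hlam ht)).ne'
  have htime : (fun s => p x s) =ᶠ[𝓝 t] fun s =>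
      lam / (2 * c) *
        (powerSum besselCoeff ((lam / c) ^ 2 / 4 * (c ^ 2 * s ^ 2 - x ^ 2)) / sinh (lam * s)) := by
    filter_upwards [besselI0_mul_sqrt_eventuallyEq (lam / c)
      (r := fun s => c ^ 2 * s ^ 2 - x ^ 2) (by fun_prop) hcone] with s hs
    rw [hp, hs]
    ring
  have hspace : (fun y => p y t) =ᶠ[𝓝 x] fun y =>
      lam / (2 * c * sinh (lam * t)) *
        powerSum besselCoeff ((lam / c) ^ 2 / 4 * (c ^ 2 * t ^ 2 - y ^ 2)) := by
    filter_upwards [besselI0_mul_sqrt_eventuallyEq (lam / c)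
      (r := fun y => c ^ 2 * t ^ 2 - y ^ 2) (by fun_prop) hcone] with y hy
    rw [hp, hy]
    ring
  have hF := hasDerivAt_powerSum abs_besselCoeff_le
  have hF' := hasDerivAt_powerSum (abs_derivCoeff_le abs_besselCoeff_le)
  have hq := hasDerivAt_quadratic (lam / c) c x
  rw [(htime.iteratedDeriv 2).eq_of_nhds, htime.deriv_eq, (hspace.iteratedDeriv 2).eq_of_nhds,
    iteratedDeriv_const_mul_field, iteratedDeriv_const_mul_field, deriv_const_mul_field,
    mul_left_comm _ (lam / (2 * c)), ← mul_add,
    iteratedDeriv_two_div_sinh_add_deriv lam (hasDerivAt_comp_of_hasDerivAt_linear hF hq)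
      (hasDerivAt_deriv_comp_of_hasDerivAt_linear hF' hq t) hsinh]
  have hKG := powerSum_besselCoeff_kleinGordon (lam / c) c x t
  rw [div_mul_cancel₀ lam hc.ne'] at hKG
  linear_combination lam / (2 * c) / sinh (lam * t) * hKG
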